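/- Let n ≥ 1 and let R = ℂ[x₁,…,x_n]. Let φ^{(1)},…,φ^{(n)} ∈ Mat_{2×2}(R) be pairwise commuting matrices with φ^{(h)}_{11} = 0 for every h, with φ^{(1)} ≠ 0, and such that for every nonzero φ^{(h)} every common divisor of its four entries is a unit of R. If det φ^{(1)} = 0 and φ^{(1)}_{12} ≠ 0 (hence φ^{(1)}_{21} = 0), then ∑_{h=1}^n I_{φ^{(h)}} is the principal ideal of R[z₁,z₂] generated by z₂ (φ^{(1)}_{22} z₁ − φ^{(1)}_{12} z₂). -/

import Mathlib

/-! Write `φ⁽¹⁾ = [[0, b], [c, d]]`. Since `det φ⁽¹⁾ = -bc` and `b ≠ 0`, `c = 0`, and primitivity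
makes `b` and `d` coprime. Commuting with `φ⁽¹⁾` then forces `φ⁽ʰ⁾₂₁ = 0` and `φ⁽ʰ⁾₁₂ d = b φ⁽ʰ⁾₂₂`,
so every `φ⁽ʰ⁾` is a multiple `g • φ⁽¹⁾` and each `I_{φ⁽ʰ⁾}` lies in `I_{φ⁽¹⁾}`, whose generator
factors as `z₂ (d z₁ − b z₂)`. -/

open MvPolynomial

/-- The ideal `I_M` of `R[z₁,z₂]` generated by
`M_{21} z₁² + (M_{22} − M_{11}) z₁z₂ − M_{12} z₂² = ∑ₖ z_k (M_{2k} z₁ − M_{1k} z₂)`. -/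
noncomputable def higgsIdeal {R : Type*} [CommRing R]
    (M : Matrix (Fin 2) (Fin 2) R) : Ideal (MvPolynomial (Fin 2) R) :=
  Ideal.span { p | ∃ i j : Fin 2, i < j ∧
    p = ∑ k : Fin 2, X k * (C (M j k) * X i - C (M i k) * X j) }

section Matrix

variable {R : Type*} [CommRing R] {M N : Matrix (Fin 2) (Fin 2) R}

theorem Matrix.apply_one_zero_eq_zero_of_det_eq_zero [NoZeroDivisors R] (h00 : M 0 0 = 0)
    (hdet : M.det = 0) (h01 : M 0 1 ≠ 0) : M 1 0 = 0 := by
  rw [Matrix.det_fin_two, h00, zero_mul, zero_sub, neg_eq_zero] at hdet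
  exact (mul_eq_zero.1 hdet).resolve_left h01

theorem Matrix.isRelPrime_of_forall_dvd_isUnit
    (hprim : ∀ g : R, (∀ i j : Fin 2, g ∣ M i j) → IsUnit g)
    (h00 : M 0 0 = 0) (h10 : M 1 0 = 0) : IsRelPrime (M 0 1) (M 1 1) := by
  intro g hg01 hg11
  refine hprim g fun i j => ?_
  fin_cases i <;> fin_cases j <;> simp [h00, h10, hg01, hg11]

theorem Matrix.exists_eq_smul_of_commute [IsDomain R] [DecompositionMonoid R]
    (h00 : M 0 0 = 0) (h10 : M 1 0 = 0) (h01 : M 0 1 ≠ 0)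
    (hrel : IsRelPrime (M 0 1) (M 1 1)) (hN : N 0 0 = 0) (hMN : Commute M N) :
    ∃ g : R, N = g • M := by
  have e00 := congrFun (congrFun hMN.eq 0) 0
  have e01 := congrFun (congrFun hMN.eq 0) 1
  simp only [Matrix.mul_apply, Fin.sum_univ_two, h00, h10, hN] at e00 e01
  have hN10 : N 1 0 = 0 := by simpa [h01] using e00
  obtain ⟨g, hg⟩ : M 0 1 ∣ N 0 1 :=
    hrel.dvd_of_dvd_mul_right ⟨N 1 1, by linear_combination -e01⟩
  have hN11 : N 1 1 = g * M 1 1 :=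
    mul_left_cancel₀ h01 (by linear_combination e01 + M 1 1 * hg)
  refine ⟨g, Matrix.ext fun i j => ?_⟩
  fin_cases i <;> fin_cases j <;> simp [h00, h10, hN, hN10, hg, hN11, mul_comm]

end Matrix

section HiggsIdeal

variable {R : Type*} [CommRing R]

noncomputable def higgsForm (M : Matrix (Fin 2) (Fin 2) R) : MvPolynomial (Fin 2) R :=
  ∑ k : Fin 2, X k * (C (M 1 k) * X 0 - C (M 0 k) * X 1)

theorem higgsIdeal_eq_span_higgsForm (M : Matrix (Fin 2) (Fin 2) R) :
    higgsIdeal M = Ideal.span {higgsForm M} := by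
  refine congrArg Ideal.span (Set.ext fun p => ⟨?_, ?_⟩)
  · rintro ⟨i, j, hij, rfl⟩
    fin_cases i <;> fin_cases j <;> simp_all [higgsForm]
  · rintro rfl
    exact ⟨0, 1, Fin.zero_lt_one, rfl⟩

theorem higgsForm_smul (g : R) (M : Matrix (Fin 2) (Fin 2) R) :
    higgsForm (g • M) = C g * higgsForm M := by
  simp only [higgsForm, Fin.sum_univ_two, Matrix.smul_apply, smul_eq_mul, map_mul]
  ring

theorem higgsIdeal_smul_le (g : R) (M : Matrix (Fin 2) (Fin 2) R) :
    higgsIdeal (g • M) ≤ higgsIdeal M := by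
  simp only [higgsIdeal_eq_span_higgsForm, higgsForm_smul]
  exact Ideal.span_singleton_le_span_singleton.2 (dvd_mul_left _ _)

theorem higgsForm_of_apply_zero_eq_zero {M : Matrix (Fin 2) (Fin 2) R}
    (h00 : M 0 0 = 0) (h10 : M 1 0 = 0) :
    higgsForm M = X 1 * (C (M 1 1) * X 0 - C (M 0 1) * X 1) := by
  simp [higgsForm, Fin.sum_univ_two, h00, h10]

end HiggsIdeal

/-- Proposition 5.2, case `det φ⁽¹⁾ = 0`: for pairwise commuting `2×2` Higgs-field
matrices over `ℂ[x₁,…,x_n]` with vanishing `(1,1)`-entries, primitive entries, and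
`φ⁽¹⁾ ≠ 0` with `det φ⁽¹⁾ = 0` and `φ⁽¹⁾₁₂ ≠ 0` (hence `φ⁽¹⁾₂₁ = 0`), the ideal
`∑ₕ I_{φ⁽ʰ⁾}` is principal, generated by `z₂ (φ⁽¹⁾₂₂ z₁ − φ⁽¹⁾₁₂ z₂)`. -/
theorem stmt13 (n : ℕ) (hn : 1 ≤ n)
    (φ : Fin n → Matrix (Fin 2) (Fin 2) (MvPolynomial (Fin n) ℂ))
    (hcomm : ∀ h h', Commute (φ h) (φ h'))
    (h11 : ∀ h, φ h 0 0 = 0)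
    (hφ1 : φ ⟨0, hn⟩ ≠ 0)
    (hgcd : ∀ h, φ h ≠ 0 → ∀ g : MvPolynomial (Fin n) ℂ,
      (∀ i j : Fin 2, g ∣ φ h i j) → IsUnit g)
    (hdet : (φ ⟨0, hn⟩).det = 0) (h12 : φ ⟨0, hn⟩ 0 1 ≠ 0) :
    φ ⟨0, hn⟩ 1 0 = 0 ∧
    (∑ h, higgsIdeal (φ h)) =
      Ideal.span {X 1 * (C (φ ⟨0, hn⟩ 1 1) * X 0 - C (φ ⟨0, hn⟩ 0 1) * X 1)} := by
  set φ₁ := φ ⟨0, hn⟩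
  have h10 : φ₁ 1 0 = 0 := Matrix.apply_one_zero_eq_zero_of_det_eq_zero (h11 _) hdet h12
  have hrel := Matrix.isRelPrime_of_forall_dvd_isUnit (hgcd _ hφ1) (h11 _) h10
  have hφ₁ : higgsIdeal φ₁ = Ideal.span {X 1 * (C (φ₁ 1 1) * X 0 - C (φ₁ 0 1) * X 1)} := by
    rw [higgsIdeal_eq_span_higgsForm, higgsForm_of_apply_zero_eq_zero (h11 _) h10]
  refine ⟨h10, ?_⟩
  rw [← hφ₁, Ideal.sum_eq_sup]
  refine le_antisymm (Finset.sup_le fun h _ => ?_) (Finset.le_sup (f := fun h => higgsIdeal (φ h))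
    (Finset.mem_univ _))
  obtain ⟨g, hg⟩ :=
    Matrix.exists_eq_smul_of_commute (h11 _) h10 h12 hrel (h11 h) (hcomm ⟨0, hn⟩ h)
  rw [hg]
  exact higgsIdeal_smul_le g φ₁
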